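/- arXiv:1503.07013 — 7 statements merged into one kernel-verified Lean document; each statement's English description precedes it below -/
import Mathlib

section
/- Let π : A → B be a morphism of unital bialgebras with divisions and let 0 : B → A be a section of π. Then F(A) = { Σ u₍₁₎/0(π(u₍₂₎)) : u ∈ A } = { Σ 0(π(u₍₁₎))\u₍₂₎ : u ∈ A } (Sweedler notation for the comultiplication of A). -/
open TensorProduct

namespace FormalLoops

variable (k : Type*) [Field k]

/-- A unital, not necessarily associative, bialgebra with left and right divisions:
a cocommutative coassociative counital coalgebra together with a bilinear unital
multiplication and bilinear left/right divisions which are coalgebra morphisms and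
satisfy the division cancellation laws (in Sweedler form). -/
structure DivBialg (A : Type*) [AddCommGroup A] [Module k A] where
  Δ : A →ₗ[k] A ⊗[k] A
  ε : A →ₗ[k] k
  mul : A →ₗ[k] A →ₗ[k] A
  one : A
  ld : A →ₗ[k] A →ₗ[k] A
  rd : A →ₗ[k] A →ₗ[k] A
  coassoc : ∀ u : A, (TensorProduct.assoc k A A A) ((Δ.rTensor A) (Δ u)) = (Δ.lTensor A) (Δ u)
  counit_left : ∀ u : A, (TensorProduct.lid k A) ((ε.rTensor A) (Δ u)) = u
  counit_right : ∀ u : A, (TensorProduct.rid k A) ((ε.lTensor A) (Δ u)) = u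
  cocomm : ∀ u : A, (TensorProduct.comm k A A) (Δ u) = Δ u
  Δ_one : Δ one = one ⊗ₜ[k] one
  ε_one : ε one = 1
  one_mul : ∀ u, mul one u = u
  mul_one : ∀ u, mul u one = u
  Δ_mul : ∀ u v, Δ (mul u v) = TensorProduct.map₂ mul mul (Δ u) (Δ v)
  ε_mul : ∀ u v, ε (mul u v) = ε u * ε v
  Δ_ld : ∀ u v, Δ (ld u v) = TensorProduct.map₂ ld ld (Δ u) (Δ v)
  ε_ld : ∀ u v, ε (ld u v) = ε u * ε v
  Δ_rd : ∀ u v, Δ (rd u v) = TensorProduct.map₂ rd rd (Δ u) (Δ v)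
  ε_rd : ∀ u v, ε (rd u v) = ε u * ε v
  /-- Σ u₍₁₎\(u₍₂₎v) = ε(u)v -/
  ld_mul_cancel : ∀ u v, TensorProduct.lift ld ((LinearMap.lTensor A (mul.flip v)) (Δ u)) = ε u • v
  /-- Σ u₍₁₎(u₍₂₎\v) = ε(u)v -/
  mul_ld_cancel : ∀ u v, TensorProduct.lift mul ((LinearMap.lTensor A (ld.flip v)) (Δ u)) = ε u • v
  /-- Σ (vu₍₁₎)/u₍₂₎ = ε(u)v -/
  rd_mul_cancel : ∀ u v, TensorProduct.lift rd ((LinearMap.rTensor A (mul v)) (Δ u)) = ε u • v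
  /-- Σ (v/u₍₁₎)u₍₂₎ = ε(u)v -/
  mul_rd_cancel : ∀ u v, TensorProduct.lift mul ((LinearMap.rTensor A (rd v)) (Δ u)) = ε u • v

variable {A B : Type*} [AddCommGroup A] [Module k A] [AddCommGroup B] [Module k B]

/-- A morphism of unital bialgebras with divisions. -/
structure DivBialgHom (SA : DivBialg k A) (SB : DivBialg k B) (π : A →ₗ[k] B) : Prop where
  map_Δ : ∀ u, TensorProduct.map π π (SA.Δ u) = SB.Δ (π u)
  map_ε : ∀ u, SB.ε (π u) = SA.ε u
  map_mul : ∀ u v, π (SA.mul u v) = SB.mul (π u) (π v)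
  map_one : π SA.one = SB.one
  map_ld : ∀ u v, π (SA.ld u v) = SB.ld (π u) (π v)
  map_rd : ∀ u v, π (SA.rd u v) = SB.rd (π u) (π v)

/-- `D` is a subcoalgebra w.r.t. the comultiplication `Δ`: `Δ(D) ⊆ D ⊗ D`. -/
def IsSubcoalg {M : Type*} [AddCommGroup M] [Module k M] (Δ : M →ₗ[k] M ⊗[k] M)
    (D : Submodule k M) : Prop :=
  ∀ x ∈ D, Δ x ∈ LinearMap.range (TensorProduct.map D.subtype D.subtype)

/-- `F(A)`: the sum of all subcoalgebras `D ⊆ A` on which `π = ε(·) • 1`. -/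
def Fsub (SA : DivBialg k A) (oneB : B) (π : A →ₗ[k] B) : Submodule k A :=
  sSup {D : Submodule k A | IsSubcoalg k SA.Δ D ∧ ∀ x ∈ D, π x = SA.ε x • oneB}

end FormalLoops

/-!
Write `w = z ∘ π`. The maps `R u = Σ u₍₁₎ / w(u₍₂₎)` and `L u = Σ w(u₍₁₎) \ u₍₂₎` are
coalgebra endomorphisms of `A`, because `/`, `\` and `w` are coalgebra morphisms and `A` is
cocommutative; and `π ∘ R = π ∘ L = ε(·) 1` by the cancellation laws of `B`. So their images are
subcoalgebras on which `π = ε(·) 1`, i.e. they lie in `F(A)`. Conversely, on a subcoalgebra `D`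
with `π = ε(·) 1` also `w = ε(·) 1`, so `R` and `L` are the identity on `D` by `u / 1 = u = 1 \ u`
and counitality; hence `F(A)` lies in both images.
-/

theorem TensorProduct.map₂_apply_apply_eq_map_lift {R M N M₂ N₂ M₃ N₃ : Type*} [CommSemiring R]
    [AddCommMonoid M] [Module R M] [AddCommMonoid N] [Module R N] [AddCommMonoid M₂] [Module R M₂]
    [AddCommMonoid N₂] [Module R N₂] [AddCommMonoid M₃] [Module R M₃] [AddCommMonoid N₃]
    [Module R N₃] (f : M →ₗ[R] M₂ →ₗ[R] M₃) (g : N →ₗ[R] N₂ →ₗ[R] N₃)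
    (p : M ⊗[R] N) (q : M₂ ⊗[R] N₂) :
    TensorProduct.map₂ f g p q
      = TensorProduct.map (TensorProduct.lift f) (TensorProduct.lift g)
          (TensorProduct.tensorTensorTensorComm R M N M₂ N₂ (p ⊗ₜ q)) := by
  have : TensorProduct.map₂ f g = (TensorProduct.mk R _ _).compr₂
      (TensorProduct.map (TensorProduct.lift f) (TensorProduct.lift g)
        ∘ₗ (TensorProduct.tensorTensorTensorComm R M N M₂ N₂).toLinearMap) := by
    ext; simp
  rw [this]; rfl

namespace FormalLoops
open TensorProduct LinearMap

variable {k : Type*} [Field k] {A B C : Type*} [AddCommGroup A] [Module k A]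
  [AddCommGroup B] [Module k B] [AddCommGroup C] [Module k C]

namespace DivBialg
variable (S : DivBialg k A)

abbrev toCoalgebra : Coalgebra k A where
  comul := S.Δ
  counit := S.ε
  coassoc := LinearMap.ext S.coassoc
  rTensor_counit_comp_comul := LinearMap.ext fun u => by
    simpa using congrArg (TensorProduct.lid k A).symm (S.counit_left u)
  lTensor_counit_comp_comul := LinearMap.ext fun u => by
    simpa using congrArg (TensorProduct.rid k A).symm (S.counit_right u)

/-- This says that `Δ : A → A ⊗ A` is a coalgebra morphism, which is where cocommutativity
enters. -/
theorem tensorTensorTensorComm_map_comul_comul (u : A) :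
    tensorTensorTensorComm k A A A A (map S.Δ S.Δ (S.Δ u)) = map S.Δ S.Δ (S.Δ u) := by
  let _ := S.toCoalgebra
  have : Coalgebra.IsCocomm k A := ⟨LinearMap.ext S.cocomm⟩
  exact (LinearMap.congr_fun (Coalgebra.comulCoalgHom k A).map_comp_comul u).symm

theorem comul_lift {d : A →ₗ[k] A →ₗ[k] A}
    (hd : ∀ a b, S.Δ (d a b) = map₂ d d (S.Δ a) (S.Δ b)) (x : A ⊗[k] A) :
    S.Δ (lift d x) = map (lift d) (lift d) (tensorTensorTensorComm k A A A A (map S.Δ S.Δ x)) := by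
  induction x using TensorProduct.induction_on with
  | zero => simp
  | tmul a b => simp [hd, map₂_apply_apply_eq_map_lift]
  | add x y hx hy => simp only [map_add, hx, hy]

def convolution (d : A →ₗ[k] A →ₗ[k] A) (f g : A →ₗ[k] A) : A →ₗ[k] A :=
  lift d ∘ₗ map f g ∘ₗ S.Δ

theorem comul_convolution {d : A →ₗ[k] A →ₗ[k] A}
    (hd : ∀ a b, S.Δ (d a b) = map₂ d d (S.Δ a) (S.Δ b)) {f g : A →ₗ[k] A}
    (hf : ∀ a, map f f (S.Δ a) = S.Δ (f a)) (hg : ∀ a, map g g (S.Δ a) = S.Δ (g a)) (u : A) :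
    S.Δ (S.convolution d f g u)
      = map (S.convolution d f g) (S.convolution d f g) (S.Δ u) := by
  have hfg : map S.Δ S.Δ ∘ₗ map f g = map (map f f) (map g g) ∘ₗ map S.Δ S.Δ := by
    ext a b; simp [hf, hg]
  calc S.Δ (S.convolution d f g u)
      = map (lift d) (lift d) (tensorTensorTensorComm k A A A A
          (map (map f f) (map g g) (map S.Δ S.Δ (S.Δ u)))) := by
        rw [convolution, comp_apply, comp_apply, comul_lift S hd, ← comp_apply (map S.Δ S.Δ),
          hfg, comp_apply]
    _ = map (lift d) (lift d) (map (map f g) (map f g)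
          (tensorTensorTensorComm k A A A A (map S.Δ S.Δ (S.Δ u)))) := by
        rw [← LinearEquiv.coe_coe, ← comp_apply (map (map f g) (map f g)),
          ← tensorTensorTensorComm_comp_map, comp_apply, LinearEquiv.coe_coe]
    _ = map (S.convolution d f g) (S.convolution d f g) (S.Δ u) := by
        rw [tensorTensorTensorComm_map_comul_comul, convolution, map_comp, map_comp]
        rfl

theorem rd_one (v : A) : S.rd v S.one = v := by
  simpa [S.Δ_one, S.ε_one, S.mul_one] using S.rd_mul_cancel S.one v

theorem ld_one (v : A) : S.ld S.one v = v := by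
  simpa [S.Δ_one, S.ε_one, S.one_mul] using S.ld_mul_cancel S.one v

theorem lift_rd_comul (v : A) : lift S.rd (S.Δ v) = S.ε v • S.one := by
  simpa [show S.mul S.one = LinearMap.id from LinearMap.ext S.one_mul]
    using S.rd_mul_cancel v S.one

theorem lift_ld_comul (v : A) : lift S.ld (S.Δ v) = S.ε v • S.one := by
  simpa [show S.mul.flip S.one = LinearMap.id from LinearMap.ext S.mul_one]
    using S.ld_mul_cancel v S.one

variable {S} in
theorem convolution_rd_id_eq_self {g : A →ₗ[k] A} {D : Submodule k A}
    (hD : IsSubcoalg k S.Δ D) (hg : ∀ d ∈ D, g d = S.ε d • S.one) {x : A} (hx : x ∈ D) :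
    S.convolution S.rd LinearMap.id g x = x := by
  obtain ⟨y, hy⟩ := hD x hx
  have hcounit : lift S.rd ∘ₗ map LinearMap.id g ∘ₗ map D.subtype D.subtype
      = (TensorProduct.rid k A).toLinearMap ∘ₗ S.ε.lTensor A ∘ₗ map D.subtype D.subtype := by
    ext d₁ d₂
    simp [hg d₂ d₂.2, rd_one]
  conv_rhs => rw [← S.counit_right x]
  simpa [convolution, ← hy] using LinearMap.congr_fun hcounit y

variable {S} in
theorem convolution_ld_id_eq_self {f : A →ₗ[k] A} {D : Submodule k A}
    (hD : IsSubcoalg k S.Δ D) (hf : ∀ d ∈ D, f d = S.ε d • S.one) {x : A} (hx : x ∈ D) :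
    S.convolution S.ld f LinearMap.id x = x := by
  obtain ⟨y, hy⟩ := hD x hx
  have hcounit : lift S.ld ∘ₗ map f LinearMap.id ∘ₗ map D.subtype D.subtype
      = (TensorProduct.lid k A).toLinearMap ∘ₗ S.ε.rTensor A ∘ₗ map D.subtype D.subtype := by
    ext d₁ d₂
    simp [hf d₁ d₁.2, ld_one]
  conv_rhs => rw [← S.counit_left x]
  simpa [convolution, ← hy] using LinearMap.congr_fun hcounit y

end DivBialg

namespace DivBialgHom
variable {SA : DivBialg k A} {SB : DivBialg k B} {SC : DivBialg k C}

theorem comp {g : B →ₗ[k] C} {f : A →ₗ[k] B} (hg : DivBialgHom k SB SC g)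
    (hf : DivBialgHom k SA SB f) : DivBialgHom k SA SC (g ∘ₗ f) where
  map_Δ u := by rw [comp_apply, ← hg.map_Δ, ← hf.map_Δ, map_map, map_comp]
  map_ε u := by rw [comp_apply, hg.map_ε, hf.map_ε]
  map_mul u v := by simp only [comp_apply, hf.map_mul, hg.map_mul]
  map_one := by rw [comp_apply, hf.map_one, hg.map_one]
  map_ld u v := by simp only [comp_apply, hf.map_ld, hg.map_ld]
  map_rd u v := by simp only [comp_apply, hf.map_rd, hg.map_rd]

variable {π : A →ₗ[k] B}

theorem apply_lift_rd (hπ : DivBialgHom k SA SB π) (x : A ⊗[k] A) :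
    π (lift SA.rd x) = lift SB.rd (map π π x) := by
  induction x using TensorProduct.induction_on with
  | zero => simp
  | tmul a b => simp [hπ.map_rd]
  | add x y hx hy => simp only [map_add, hx, hy]

theorem apply_lift_ld (hπ : DivBialgHom k SA SB π) (x : A ⊗[k] A) :
    π (lift SA.ld x) = lift SB.ld (map π π x) := by
  induction x using TensorProduct.induction_on with
  | zero => simp
  | tmul a b => simp [hπ.map_ld]
  | add x y hx hy => simp only [map_add, hx, hy]

theorem apply_convolution_rd (hπ : DivBialgHom k SA SB π) {f g : A →ₗ[k] A}
    (hf : π ∘ₗ f = π) (hg : π ∘ₗ g = π) (u : A) :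
    π (SA.convolution SA.rd f g u) = SA.ε u • SB.one := by
  rw [DivBialg.convolution, comp_apply, comp_apply, hπ.apply_lift_rd, ← comp_apply (map π π),
    ← map_comp, hf, hg, hπ.map_Δ, SB.lift_rd_comul, hπ.map_ε]

theorem apply_convolution_ld (hπ : DivBialgHom k SA SB π) {f g : A →ₗ[k] A}
    (hf : π ∘ₗ f = π) (hg : π ∘ₗ g = π) (u : A) :
    π (SA.convolution SA.ld f g u) = SA.ε u • SB.one := by
  rw [DivBialg.convolution, comp_apply, comp_apply, hπ.apply_lift_ld, ← comp_apply (map π π),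
    ← map_comp, hf, hg, hπ.map_Δ, SB.lift_ld_comul, hπ.map_ε]

end DivBialgHom

theorem isSubcoalg_range {M : Type*} [AddCommGroup M] [Module k M] {Δ : M →ₗ[k] M ⊗[k] M}
    {T : M →ₗ[k] M} (hT : ∀ u, Δ (T u) = map T T (Δ u)) : IsSubcoalg k Δ (range T) := by
  rintro _ ⟨u, rfl⟩
  exact ⟨map T.rangeRestrict T.rangeRestrict (Δ u), by rw [hT, ← comp_apply, ← map_comp]; rfl⟩

theorem fsub_eq_range {SA : DivBialg k A} {SB : DivBialg k B} {π : A →ₗ[k] B}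
    (hπ : DivBialgHom k SA SB π) {T : A →ₗ[k] A} (hΔT : ∀ u, SA.Δ (T u) = map T T (SA.Δ u))
    (hπT : ∀ u, π (T u) = SA.ε u • SB.one)
    (hT : ∀ D : Submodule k A, IsSubcoalg k SA.Δ D → (∀ x ∈ D, π x = SA.ε x • SB.one) →
      ∀ x ∈ D, T x = x) :
    Fsub k SA SB.one π = range T := by
  refine le_antisymm (sSup_le fun D ⟨hD, hπD⟩ x hx => ⟨x, hT D hD hπD x hx⟩) (le_sSup ?_)
  have hεT (u : A) : SA.ε (T u) = SA.ε u := by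
    rw [← hπ.map_ε, hπT, map_smul, SB.ε_one, smul_eq_mul, mul_one]
  refine ⟨isSubcoalg_range hΔT, ?_⟩
  rintro _ ⟨u, rfl⟩
  rw [hπT, hεT]

end FormalLoops

open FormalLoops in
theorem fsub_eq_range_div_general
    (k : Type*) [Field k]
    {A B : Type*} [AddCommGroup A] [Module k A] [AddCommGroup B] [Module k B]
    (SA : DivBialg k A) (SB : DivBialg k B)
    (π : A →ₗ[k] B) (z : B →ₗ[k] A)
    (hπ : DivBialgHom k SA SB π) (hz : DivBialgHom k SB SA z)
    (hsec : π ∘ₗ z = LinearMap.id) :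
    (((Fsub k SA SB.one π : Submodule k A) : Set A)
        = Set.range (fun u : A =>
            TensorProduct.lift SA.rd ((LinearMap.lTensor A (z ∘ₗ π)) (SA.Δ u)))) ∧
    (((Fsub k SA SB.one π : Submodule k A) : Set A)
        = Set.range (fun u : A =>
            TensorProduct.lift SA.ld ((LinearMap.rTensor A (z ∘ₗ π)) (SA.Δ u)))) := by
  have hzπ : DivBialgHom k SA SA (z ∘ₗ π) := hz.comp hπ
  have hπzπ : π ∘ₗ z ∘ₗ π = π := by rw [← LinearMap.comp_assoc, hsec, LinearMap.id_comp]
  have hzπ_eq (D : Submodule k A) (hπD : ∀ x ∈ D, π x = SA.ε x • SB.one) :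
      ∀ d ∈ D, (z ∘ₗ π) d = SA.ε d • SA.one := fun d hd => by
    rw [LinearMap.comp_apply, hπD d hd, map_smul, hz.map_one]
  have hid (a : A) : TensorProduct.map (LinearMap.id : A →ₗ[k] A) LinearMap.id (SA.Δ a) = SA.Δ a :=
    by simp
  constructor
  · rw [fsub_eq_range hπ (SA.comul_convolution SA.Δ_rd hid hzπ.map_Δ)
      (hπ.apply_convolution_rd (LinearMap.comp_id π) hπzπ)
      fun D hD hπD _ => DivBialg.convolution_rd_id_eq_self hD (hzπ_eq D hπD)]
    rfl
  · rw [fsub_eq_range hπ (SA.comul_convolution SA.Δ_ld hzπ.map_Δ hid)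
      (hπ.apply_convolution_ld hπzπ (LinearMap.comp_id π))
      fun D hD hπD _ => DivBialg.convolution_ld_id_eq_self hD (hzπ_eq D hπD)]
    rfl

open FormalLoops in
/-- If `π : A → B` is a morphism of unital bialgebras with divisions and
`0 = z : B → A` is a section of `π`, then
`F(A) = { Σ u₍₁₎/z(π(u₍₂₎)) | u ∈ A } = { Σ z(π(u₍₁₎))\u₍₂₎ | u ∈ A }`. -/
theorem fsub_eq_range_div
    (k : Type*) [Field k] [CharZero k]
    {A B : Type*} [AddCommGroup A] [Module k A] [AddCommGroup B] [Module k B]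
    (SA : DivBialg k A) (SB : DivBialg k B)
    (π : A →ₗ[k] B) (z : B →ₗ[k] A)
    (hπ : DivBialgHom k SA SB π) (hz : DivBialgHom k SB SA z)
    (hsec : π ∘ₗ z = LinearMap.id) :
    (((Fsub k SA SB.one π : Submodule k A) : Set A)
        = Set.range (fun u : A =>
            TensorProduct.lift SA.rd ((LinearMap.lTensor A (z ∘ₗ π)) (SA.Δ u)))) ∧
    (((Fsub k SA SB.one π : Submodule k A) : Set A)
        = Set.range (fun u : A =>
            TensorProduct.lift SA.ld ((LinearMap.rTensor A (z ∘ₗ π)) (SA.Δ u)))) :=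
  fsub_eq_range_div_general k SA SB π z hπ hz hsec
end

section
/- Let Q be a Moufang loop, M an additive abelian group, and r, s : Q × Q → Aut(M) maps into the additive automorphisms of M. Let E be the magma M × Q with multiplication (x,a)·(y,b) := (r(a,b)(x) + s(a,b)(y), ab). Then the following are equivalent: (i) for every a ∈ Q the element (0,a) of E is a Moufang element, i.e. (0,a)·(X·((0,a)·Y)) = (((0,a)·X)·(0,a))·Y and ((X·(0,a))·Y)·(0,a) = X·((0,a)·(Y·(0,a))) for all X, Y ∈ E; (ii) for all a, b, c ∈ Q the following four identities of automorphisms of M hold (∘ denotes composition of maps, the rightmost factor applied first): r(c, a(ba)) = r((ca)b, a) ∘ r(ca, b) ∘ r(c, a); r((ca)b, a) ∘ s(ca, b) = s(c, a(ba)) ∘ s(a, ba) ∘ r(b, a); s(a, b(ac)) ∘ r(b, ac) = r((ab)a, c) ∘ r(ab, a) ∘ s(a, b); s(a, b(ac)) ∘ s(b, ac) ∘ s(a, c) = s((ab)a, c). -/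
namespace LoopStmt

/-- A loop: a binary multiplication with a two-sided identity and two-sided divisions. -/
structure LoopStruct (Q : Type*) where
  mul : Q → Q → Q
  e : Q
  ld : Q → Q → Q
  rd : Q → Q → Q
  one_mul : ∀ a, mul e a = a
  mul_one : ∀ a, mul a e = a
  ld_mul : ∀ a b, ld a (mul a b) = b
  mul_ld : ∀ a b, mul a (ld a b) = b
  rd_mul : ∀ a b, rd (mul a b) b = a
  mul_rd : ∀ a b, mul (rd a b) b = a

/-- A loop is Moufang when it satisfies both Moufang identities. -/
def LoopStruct.IsMoufang {Q : Type*} (L : LoopStruct Q) : Prop :=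
  (∀ a x y, L.mul a (L.mul x (L.mul a y)) = L.mul (L.mul (L.mul a x) a) y) ∧
  (∀ a x y, L.mul (L.mul (L.mul x a) y) a = L.mul x (L.mul a (L.mul y a)))

/-- A Moufang element of a magma `(E, mul)`. -/
def IsMoufangElt {E : Type*} (mul : E → E → E) (a : E) : Prop :=
  (∀ x y, mul a (mul x (mul a y)) = mul (mul (mul a x) a) y) ∧
  (∀ x y, mul (mul (mul x a) y) a = mul x (mul a (mul y a)))

end LoopStmt

open LoopStmt in
/-- for a Moufang loop `Q`, an abelian group `M` and maps
`r, s : Q × Q → Aut(M)`, the elements `(0, a)` are Moufang elements of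
`E = M × Q` with `(x,a)·(y,b) = (r(a,b)x + s(a,b)y, ab)` iff the four
autotopism identities hold. -/
theorem moufang_elements_iff_relative_identities
    {Q M : Type*} [AddCommGroup M]
    (L : LoopStruct Q) (hL : L.IsMoufang)
    (r s : Q → Q → (M ≃+ M))
    (emul : M × Q → M × Q → M × Q)
    (hemul : emul = fun p q => (r p.2 q.2 p.1 + s p.2 q.2 q.1, L.mul p.2 q.2)) :
    (∀ a : Q, IsMoufangElt emul ((0 : M), a)) ↔
    (∀ a b c : Q,
      (⇑(r c (L.mul a (L.mul b a)))
          = ⇑(r (L.mul (L.mul c a) b) a) ∘ ⇑(r (L.mul c a) b) ∘ ⇑(r c a)) ∧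
      (⇑(r (L.mul (L.mul c a) b) a) ∘ ⇑(s (L.mul c a) b)
          = ⇑(s c (L.mul a (L.mul b a))) ∘ ⇑(s a (L.mul b a)) ∘ ⇑(r b a)) ∧
      (⇑(s a (L.mul b (L.mul a c))) ∘ ⇑(r b (L.mul a c))
          = ⇑(r (L.mul (L.mul a b) a) c) ∘ ⇑(r (L.mul a b) a) ∘ ⇑(s a b)) ∧
      (⇑(s a (L.mul b (L.mul a c))) ∘ ⇑(s b (L.mul a c)) ∘ ⇑(s a c)
          = ⇑(s (L.mul (L.mul a b) a) c))) := by
  subst hemul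
  simp only [IsMoufangElt]
  constructor
  · intro h a b c
    have h1 := (h a).1
    have h2 := (h a).2
    refine ⟨?_, ?_, ?_, ?_⟩
    · funext x
      have := congrArg Prod.fst (h2 (x, c) (0, b))
      simpa using this.symm
    · funext y
      have := congrArg Prod.fst (h2 (0, c) (y, b))
      simpa using this
    · funext x
      have := congrArg Prod.fst (h1 (x, b) (0, c))
      simpa using this
    · funext y
      have := congrArg Prod.fst (h1 (0, b) (y, c))
      simpa using this
  · intro h a
    constructor
    · rintro ⟨x, b⟩ ⟨y, c⟩
      have h3 := congrFun ((h a b c).2.2.1) x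
      have h4 := congrFun ((h a b c).2.2.2) y
      simp only [Function.comp] at h3 h4
      refine Prod.ext ?_ (hL.1 a b c)
      simp [map_add, h3, h4]
    · rintro ⟨x, c⟩ ⟨y, b⟩
      have h1 := congrFun ((h a b c).1) x
      have h2 := congrFun ((h a b c).2.1) y
      simp only [Function.comp] at h1 h2
      refine Prod.ext ?_ (hL.2 a c b)
      simp [map_add, h1, h2]
end

section
/- Let k be a field, G a group, and let ρ : G → GL(V) and σ : G → GL(W) be linear representations of G on k-vector spaces V and W. Define a multiplication on E := (V ⊗ W) × G by (x, a)·(y, b) := ((ρ(b⁻¹a⁻¹ba) ⊗ id_W)(x) + (ρ(b⁻¹a⁻²b) ⊗ σ(a))(y), ab). Then E is a loop: (0, e) is a two-sided identity element (e the identity of G), and for all P, Z ∈ E there exists a unique Y ∈ E with P·Y = Z and a unique X ∈ E with X·P = Z. -/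
noncomputable def repLinEquiv {k G V : Type*} [Field k] [Group G] [AddCommGroup V]
    [Module k V] (ρ : Representation k G V) (g : G) : V ≃ₗ[k] V :=
  LinearEquiv.ofLinear (ρ g) (ρ g⁻¹)
    (by rw [← Module.End.mul_eq_comp, ← map_mul, mul_inv_cancel, map_one, Module.End.one_eq_id])
    (by rw [← Module.End.mul_eq_comp, ← map_mul, inv_mul_cancel, map_one, Module.End.one_eq_id])

noncomputable def tensorEquiv {k G V W : Type*} [Field k] [Group G] [AddCommGroup V]
    [Module k V] [AddCommGroup W] [Module k W]
    (ρ : Representation k G V) (σ : Representation k G W) (g a : G) :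
    TensorProduct k V W ≃ₗ[k] TensorProduct k V W :=
  TensorProduct.congr (repLinEquiv ρ g) (repLinEquiv σ a)

lemma tensorEquiv_apply {k G V W : Type*} [Field k] [Group G] [AddCommGroup V]
    [Module k V] [AddCommGroup W] [Module k W]
    (ρ : Representation k G V) (σ : Representation k G W) (g a : G)
    (t : TensorProduct k V W) :
    tensorEquiv ρ σ g a t = TensorProduct.map (ρ g) (σ a) t := rfl

noncomputable def tensorEquivL {k G V W : Type*} [Field k] [Group G] [AddCommGroup V]
    [Module k V] [AddCommGroup W] [Module k W]
    (ρ : Representation k G V) (g : G) :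
    TensorProduct k V W ≃ₗ[k] TensorProduct k V W :=
  TensorProduct.congr (repLinEquiv ρ g) (LinearEquiv.refl k W)

lemma tensorEquivL_apply {k G V W : Type*} [Field k] [Group G] [AddCommGroup V]
    [Module k V] [AddCommGroup W] [Module k W]
    (ρ : Representation k G V) (g : G) (t : TensorProduct k V W) :
    tensorEquivL ρ g t = TensorProduct.map (ρ g) LinearMap.id t := rfl

/-- for a group `G` with linear representations `ρ, σ` on `V, W`,
the set `E = (V ⊗ W) × G` with the indicated multiplication is a loop. -/
theorem tensor_times_group_is_loop
    (k : Type*) [Field k] {G : Type*} [Group G]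
    {V W : Type*} [AddCommGroup V] [Module k V] [AddCommGroup W] [Module k W]
    (ρ : Representation k G V) (σ : Representation k G W)
    (emul : (TensorProduct k V W) × G → (TensorProduct k V W) × G →
      (TensorProduct k V W) × G)
    (hemul : emul = fun p q =>
      (TensorProduct.map (ρ (q.2⁻¹ * p.2⁻¹ * q.2 * p.2)) LinearMap.id p.1
        + TensorProduct.map (ρ (q.2⁻¹ * p.2⁻¹ * p.2⁻¹ * q.2)) (σ p.2) q.1,
       p.2 * q.2)) :
    (∀ p, emul (0, (1 : G)) p = p ∧ emul p (0, (1 : G)) = p) ∧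
    (∀ P Z, (∃! Y, emul P Y = Z) ∧ (∃! X, emul X P = Z)) := by
  subst hemul
  constructor
  · rintro ⟨x, a⟩
    constructor
    · simp [Module.End.one_eq_id]
    · simp [Module.End.one_eq_id]
  · rintro ⟨x, a⟩ ⟨z, c⟩
    constructor
    · -- right division: solve (x,a) * Y = (z,c)
      set b : G := a⁻¹ * c with hb
      set g : G := b⁻¹ * a⁻¹ * a⁻¹ * b with hg
      set h : G := b⁻¹ * a⁻¹ * b * a with hh
      refine ⟨((tensorEquiv ρ σ g a).symm
        (z - TensorProduct.map (ρ h) LinearMap.id x), b), ?_, ?_⟩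
      · ext
        · show TensorProduct.map (ρ h) LinearMap.id x
            + TensorProduct.map (ρ g) (σ a) ((tensorEquiv ρ σ g a).symm _) = z
          rw [← tensorEquiv_apply, LinearEquiv.apply_symm_apply]
          abel
        · show a * b = c
          rw [hb, mul_inv_cancel_left]
      · rintro ⟨y', b'⟩ hy
        simp only [Prod.mk.injEq] at hy
        obtain ⟨h1, h2⟩ := hy
        have hb' : b' = b := by rw [hb, ← h2, inv_mul_cancel_left]
        subst hb'
        refine Prod.ext ?_ rfl
        show y' = (tensorEquiv ρ σ g a).symm _
        rw [LinearEquiv.eq_symm_apply, tensorEquiv_apply]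
        have := h1
        rw [← this]
        abel
    · -- left division: solve X * (x,a) = (z,c)
      set b : G := c * a⁻¹ with hb
      set g : G := a⁻¹ * b⁻¹ * a * b with hg
      set h : G := a⁻¹ * b⁻¹ * b⁻¹ * a with hh
      refine ⟨((tensorEquivL ρ g).symm
        (z - TensorProduct.map (ρ h) (σ b) x), b), ?_, ?_⟩
      · ext
        · show TensorProduct.map (ρ g) LinearMap.id ((tensorEquivL ρ g).symm _)
            + TensorProduct.map (ρ h) (σ b) x = z
          rw [← tensorEquivL_apply, LinearEquiv.apply_symm_apply]
          abel
        · show b * a = c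
          rw [hb, inv_mul_cancel_right]
      · rintro ⟨y', b'⟩ hy
        simp only [Prod.mk.injEq] at hy
        obtain ⟨h1, h2⟩ := hy
        have hb' : b' = b := by rw [hb, ← h2, mul_inv_cancel_right]
        subst hb'
        refine Prod.ext ?_ rfl
        show y' = (tensorEquivL ρ g).symm _
        rw [LinearEquiv.eq_symm_apply, tensorEquivL_apply]
        rw [← h1]
        abel
end

section
/- Let k be a field, G a group, and let ρ : G → GL(V) and σ : G → GL(W) be linear representations of G on k-vector spaces V and W. Define a multiplication on E := (V ⊗ W) × G by (x, a)·(y, b) := ((ρ(b⁻¹a⁻¹ba) ⊗ id_W)(x) + (ρ(b⁻¹a⁻²b) ⊗ σ(a))(y), ab). Then for every a ∈ G the element (0, a) is a Moufang element of E: for all X, Y ∈ E, (0,a)·(X·((0,a)·Y)) = (((0,a)·X)·(0,a))·Y and ((X·(0,a))·Y)·(0,a) = X·((0,a)·(Y·(0,a))). -/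
open TensorProduct

section MoufangMul

variable {k G V W : Type*} [CommRing k] [Group G] [AddCommGroup V] [Module k V]
  [AddCommGroup W] [Module k W] (ρ : Representation k G V) (σ : Representation k G W)

def moufangMul (p q : (V ⊗[k] W) × G) : (V ⊗[k] W) × G :=
  (map (ρ (q.2⁻¹ * p.2⁻¹ * q.2 * p.2)) LinearMap.id p.1
    + map (ρ (q.2⁻¹ * p.2⁻¹ * p.2⁻¹ * q.2)) (σ p.2) q.1, p.2 * q.2)

lemma map_map_representation (g h g' h' : G) (z : V ⊗[k] W) :
    map (ρ g) (σ h) (map (ρ g') (σ h') z) = map (ρ (g * g')) (σ (h * h')) z := by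
  rw [map_mul, map_mul, TensorProduct.map_mul]
  rfl

lemma moufangMul_mk (x y : V ⊗[k] W) (a b : G) :
    moufangMul ρ σ (x, a) (y, b) =
      (map (ρ (b⁻¹ * a⁻¹ * b * a)) (σ 1) x + map (ρ (b⁻¹ * a⁻¹ * a⁻¹ * b)) (σ a) y, a * b) := by
  rw [map_one]
  rfl

theorem moufangMul_left_moufang (a : G) (X Y : (V ⊗[k] W) × G) :
    moufangMul ρ σ (0, a) (moufangMul ρ σ X (moufangMul ρ σ (0, a) Y)) =
      moufangMul ρ σ (moufangMul ρ σ (moufangMul ρ σ (0, a) X) (0, a)) Y := by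
  obtain ⟨x, b⟩ := X
  obtain ⟨y, c⟩ := Y
  simp only [moufangMul_mk, map_zero, map_add, add_zero, zero_add, map_map_representation]
  congrm (map (ρ ?_) (σ ?_) x + map (ρ ?_) (σ ?_) y, ?_) <;> group

theorem moufangMul_right_moufang (a : G) (X Y : (V ⊗[k] W) × G) :
    moufangMul ρ σ (moufangMul ρ σ (moufangMul ρ σ X (0, a)) Y) (0, a) =
      moufangMul ρ σ X (moufangMul ρ σ (0, a) (moufangMul ρ σ Y (0, a))) := by
  obtain ⟨x, b⟩ := X
  obtain ⟨y, c⟩ := Y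
  simp only [moufangMul_mk, map_zero, map_add, add_zero, zero_add, map_map_representation]
  congrm (map (ρ ?_) (σ ?_) x + map (ρ ?_) (σ ?_) y, ?_) <;> group

end MoufangMul

open LoopStmt in
/-- for a group `G` with linear representations `ρ, σ` on `V, W`,
every element `(0, a)` of `E = (V ⊗ W) × G` with the indicated multiplication is
a Moufang element. -/
theorem group_embeds_as_moufang_elements
    (k : Type*) [Field k] {G : Type*} [Group G]
    {V W : Type*} [AddCommGroup V] [Module k V] [AddCommGroup W] [Module k W]
    (ρ : Representation k G V) (σ : Representation k G W)
    (emul : (TensorProduct k V W) × G → (TensorProduct k V W) × G →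
      (TensorProduct k V W) × G)
    (hemul : emul = fun p q =>
      (TensorProduct.map (ρ (q.2⁻¹ * p.2⁻¹ * q.2 * p.2)) LinearMap.id p.1
        + TensorProduct.map (ρ (q.2⁻¹ * p.2⁻¹ * p.2⁻¹ * q.2)) (σ p.2) q.1,
       p.2 * q.2)) :
    ∀ a : G, IsMoufangElt emul ((0 : TensorProduct k V W), a) := by
  subst hemul
  exact fun a => ⟨moufangMul_left_moufang ρ σ a, moufangMul_right_moufang ρ σ a⟩
end

section
/- Let k be a field, G a group, and let ρ : G → GL(V) and σ : G → GL(W) be linear representations of G on k-vector spaces V and W, with W ≠ 0. Define a multiplication on E := (V ⊗ W) × G by (x, a)·(y, b) := ((ρ(b⁻¹a⁻¹ba) ⊗ id_W)(x) + (ρ(b⁻¹a⁻²b) ⊗ σ(a))(y), ab). If G is a simple non-abelian group and ρ is faithful (injective), then the only a ∈ G for which (0, a) belongs to the associative nucleus Na(E) is a = e. -/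
namespace LoopStmt

/-- The associative nucleus of a magma `(E, mul)`. -/
def assocNucleus {E : Type*} (mul : E → E → E) : Set E :=
  {p | (∀ q r, mul (mul p q) r = mul p (mul q r)) ∧
       (∀ q r, mul (mul q p) r = mul q (mul p r)) ∧
       (∀ q r, mul (mul q r) p = mul q (mul r p))}

end LoopStmt

/-- Over a field, one can cancel a nonzero right tensor factor. -/
lemma tmul_right_cancel_aux {k V W : Type*} [Field k] [AddCommGroup V] [Module k V]
    [AddCommGroup W] [Module k W] {x y : V} {w : W} (hw : w ≠ 0)
    (h : x ⊗ₜ[k] w = y ⊗ₜ[k] w) : x = y := by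
  have h2 : ¬ ∀ φ : Module.Dual k W, φ w = 0 := by
    rw [Module.forall_dual_apply_eq_zero_iff]; exact hw
  obtain ⟨φ, hφ⟩ := not_forall.mp h2
  have h3 := congrArg (fun t => TensorProduct.rid k V (LinearMap.lTensor V φ t)) h
  simp only [LinearMap.lTensor_tmul, TensorProduct.rid_tmul] at h3
  exact smul_right_injective V hφ h3

open LoopStmt in
/-- if `G` is a simple non-abelian group, `ρ` is faithful and `W ≠ 0`,
then the only `a ∈ G` with `(0, a)` in the associative nucleus of
`E = (V ⊗ W) × G` is `a = 1`. -/
theorem nucleus_trivial_of_simple_faithful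
    (k : Type*) [Field k] {G : Type*} [Group G]
    {V W : Type*} [AddCommGroup V] [Module k V] [AddCommGroup W] [Module k W]
    (hW : ∃ w : W, w ≠ 0)
    (ρ : Representation k G V) (σ : Representation k G W)
    (hsimple : IsSimpleGroup G) (hnonab : ∃ g h : G, g * h ≠ h * g)
    (hfaithful : Function.Injective ρ)
    (emul : (TensorProduct k V W) × G → (TensorProduct k V W) × G →
      (TensorProduct k V W) × G)
    (hemul : emul = fun p q =>
      (TensorProduct.map (ρ (q.2⁻¹ * p.2⁻¹ * q.2 * p.2)) LinearMap.id p.1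
        + TensorProduct.map (ρ (q.2⁻¹ * p.2⁻¹ * p.2⁻¹ * q.2)) (σ p.2) q.1,
       p.2 * q.2)) :
    ∀ a : G, ((0 : TensorProduct k V W), a) ∈ assocNucleus emul → a = 1 := by
  subst hemul
  rintro a ⟨h1, -, -⟩
  obtain ⟨w₀, hw₀⟩ := hW
  have hσ : σ a w₀ ≠ 0 := by
    intro h
    apply hw₀
    have h2 := LinearMap.congr_fun (map_mul σ a⁻¹ a).symm w₀
    simpa [h] using h2.symm
  -- `a` is central
  have hcen : ∀ c : G, c * a = a * c := by
    intro c
    have hmap : ρ (c⁻¹ * a⁻¹ * c * a * (a⁻¹ * a⁻¹))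
        = ρ (c⁻¹ * a⁻¹ * a⁻¹ * c * (c⁻¹ * c)) := by
      ext v
      have h := congrArg Prod.fst (h1 (v ⊗ₜ[k] w₀, 1) (0, c))
      simp only [map_zero, map_one, zero_add, add_zero, mul_one, one_mul, inv_one,
        TensorProduct.map_tmul, LinearMap.id_apply, LinearMap.map_zero] at h
      have h' := tmul_right_cancel_aux hσ h
      simpa [map_mul] using h'
    have hg := hfaithful hmap
    have hg' : c⁻¹ * a⁻¹ * c * a⁻¹ = c⁻¹ * a⁻¹ * a⁻¹ * c := by
      group at hg ⊢
      simpa using hg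
    have : c * a⁻¹ = a⁻¹ * c := by
      have := congrArg (fun x => a * c * x) hg'
      group at this
      simpa [mul_assoc] using this
    calc c * a = a * (a⁻¹ * c) * a := by group
    _ = a * (c * a⁻¹) * a := by rw [← this]
    _ = a * c := by group
  have hmem : a ∈ Subgroup.center G := Subgroup.mem_center_iff.mpr hcen
  rcases hsimple.eq_bot_or_eq_top_of_normal (Subgroup.center G) inferInstance with hbot | htop
  · simpa [hbot, Subgroup.mem_bot] using hmem
  · obtain ⟨g, h, hgh⟩ := hnonab
    exact absurd (Subgroup.mem_center_iff.mp (htop ▸ Subgroup.mem_top h) g) hgh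
end

section
/- Let k be a field of characteristic zero and m a finite-dimensional semisimple Lie algebra over k. Then the Lie subalgebra of the product Lie algebra m × m generated by the set { (−2a, a) : a ∈ m } is all of m × m. -/
/-
Write `D_t = {(t • a, a)}` and `S` for the Lie subalgebra it generates. Bracketing two elements
of `D_t` and subtracting one gives `(t (t - 1) • ⁅a, b⁆, 0) ∈ S`, and bracketing `D_t` with
`(x, 0)` gives `(t • ⁅y, x⁆, 0)`. So when `t` and `t - 1` are units, `{x | (x, 0) ∈ S}` is an
ideal containing `⁅L, L⁆`, which is all of `L` for semisimple `L`; then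
`(0, x) = (t • x, x) - (t • x, 0)` lies in `S` too. The theorem is the case `t = -2`.
-/

namespace ProdLie

variable {L M : Type*} [LieRing L] [LieRing M]

/-- Componentwise bracket on the product. -/
instance instBracketProd : Bracket (L × M) (L × M) :=
  ⟨fun p q => (⁅p.1, q.1⁆, ⁅p.2, q.2⁆)⟩

theorem prod_bracket (p q : L × M) : ⁅p, q⁆ = (⁅p.1, q.1⁆, ⁅p.2, q.2⁆) := rfl

/-- The direct product Lie ring, with componentwise bracket. -/
instance instLieRingProd : LieRing (L × M) :=
  { (inferInstance : AddCommGroup (L × M)), instBracketProd with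
    add_lie := fun x y z => Prod.ext (add_lie x.1 y.1 z.1) (add_lie x.2 y.2 z.2)
    lie_add := fun x y z => Prod.ext (lie_add x.1 y.1 z.1) (lie_add x.2 y.2 z.2)
    lie_self := fun x => Prod.ext (lie_self x.1) (lie_self x.2)
    leibniz_lie := fun x y z =>
      Prod.ext (leibniz_lie x.1 y.1 z.1) (leibniz_lie x.2 y.2 z.2) }

variable (k : Type*) [CommRing k] [LieAlgebra k L] [LieAlgebra k M]

/-- The direct product Lie algebra. -/
instance instLieAlgebraProd : LieAlgebra k (L × M) :=
  { (inferInstance : Module k (L × M)) with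
    lie_smul := fun t x y => Prod.ext (lie_smul t x.1 y.1) (lie_smul t x.2 y.2) }

end ProdLie

namespace LieAlgebra.IsSemisimple

variable {R L : Type*} [CommRing R] [LieRing L] [LieAlgebra R L] [IsSemisimple R L]

-- An atom `I` is not abelian, so `⁅I, I⁆ ≤ I` forces `⁅I, I⁆ = I`.
theorem lie_top_eq_top : ⁅(⊤ : LieIdeal R L), (⊤ : LieIdeal R L)⁆ = ⊤ := by
  have h : sSup {I : LieIdeal R L | IsAtom I} ≤ ⁅⊤, ⊤⁆ := sSup_le fun I hI => by
    have hII : ⁅I, I⁆ = I :=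
      (hI.le_iff.mp (LieSubmodule.lie_le_left I I)).resolve_left fun h =>
        non_abelian_of_isAtom I hI ((LieSubmodule.lie_abelian_iff_lie_self_eq_bot I).mpr h)
    exact hII ▸ LieSubmodule.mono_lie le_top le_top
  rwa [sSup_atoms_eq_top, top_le_iff] at h

end LieAlgebra.IsSemisimple

namespace ProdLie

variable {R L : Type*} [CommRing R] [LieRing L] [LieAlgebra R L]

def twistedDiagonal (t : R) : Set (L × L) := {p | ∃ a : L, p = (t • a, a)}

theorem mk_smul_mem_lieSpan_twistedDiagonal (t : R) (a : L) :
    (t • a, a) ∈ LieSubalgebra.lieSpan R (L × L) (twistedDiagonal t) :=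
  LieSubalgebra.subset_lieSpan ⟨a, rfl⟩

variable {t : R}

theorem mk_lie_zero_mem_lieSpan_twistedDiagonal (ht : IsUnit t) (ht₁ : IsUnit (t - 1))
    (a b : L) : (⁅a, b⁆, 0) ∈ LieSubalgebra.lieSpan R (L × L) (twistedDiagonal t) := by
  set S := LieSubalgebra.lieSpan R (L × L) (twistedDiagonal t)
  have hmem : ((t * (t - 1)) • ⁅a, b⁆, (0 : L)) ∈ S := by
    have h : ((t * (t - 1)) • ⁅a, b⁆, (0 : L)) =
        ⁅(t • a, a), (t • b, b)⁆ - (t • ⁅a, b⁆, ⁅a, b⁆) := by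
      simp only [prod_bracket, smul_lie, lie_smul, Prod.mk_sub_mk, sub_self, mul_sub, mul_one,
        sub_smul, mul_smul]
    rw [h]
    exact S.sub_mem (S.lie_mem (mk_smul_mem_lieSpan_twistedDiagonal t a)
      (mk_smul_mem_lieSpan_twistedDiagonal t b)) (mk_smul_mem_lieSpan_twistedDiagonal t _)
  rwa [← smul_zero (t * (t - 1)), ← Prod.smul_mk, ← LieSubalgebra.mem_toSubmodule,
    Submodule.smul_mem_iff_of_isUnit _ (ht.mul ht₁)] at hmem

def twistedDiagonalFstIdeal (ht : IsUnit t) : LieIdeal R L :=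
  { (LieSubalgebra.lieSpan R (L × L) (twistedDiagonal t)).toSubmodule.comap
      (LinearMap.inl R L L) with
    lie_mem := fun {y x} hx => by
      set S := LieSubalgebra.lieSpan R (L × L) (twistedDiagonal t)
      have hmem : ⁅(t • y, y), (x, (0 : L))⁆ ∈ S :=
        S.lie_mem (mk_smul_mem_lieSpan_twistedDiagonal t y) hx
      rwa [prod_bracket, lie_zero, smul_lie, ← smul_zero t, ← Prod.smul_mk,
        ← LieSubalgebra.mem_toSubmodule, Submodule.smul_mem_iff_of_isUnit _ ht] at hmem }

theorem mem_twistedDiagonalFstIdeal {ht : IsUnit t} {x : L} :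
    x ∈ twistedDiagonalFstIdeal ht ↔
      (x, 0) ∈ LieSubalgebra.lieSpan R (L × L) (twistedDiagonal t) :=
  Iff.rfl

theorem lie_top_le_twistedDiagonalFstIdeal (ht : IsUnit t) (ht₁ : IsUnit (t - 1)) :
    ⁅(⊤ : LieIdeal R L), (⊤ : LieIdeal R L)⁆ ≤ twistedDiagonalFstIdeal ht :=
  (LieSubmodule.lie_le_iff _ _ _).mpr fun a _ b _ =>
    mem_twistedDiagonalFstIdeal.mpr (mk_lie_zero_mem_lieSpan_twistedDiagonal ht ht₁ a b)

theorem lieSpan_twistedDiagonal_eq_top (ht : IsUnit t) (ht₁ : IsUnit (t - 1))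
    (hL : ⁅(⊤ : LieIdeal R L), (⊤ : LieIdeal R L)⁆ = ⊤) :
    LieSubalgebra.lieSpan R (L × L) (twistedDiagonal t) = ⊤ := by
  set S := LieSubalgebra.lieSpan R (L × L) (twistedDiagonal t)
  have hI : ⊤ ≤ twistedDiagonalFstIdeal ht := hL ▸ lie_top_le_twistedDiagonalFstIdeal ht ht₁
  have hfst (x : L) : (x, 0) ∈ S := mem_twistedDiagonalFstIdeal.mp (hI (LieSubmodule.mem_top x))
  have hsnd (x : L) : (0, x) ∈ S := by
    simpa using S.sub_mem (mk_smul_mem_lieSpan_twistedDiagonal t x) (hfst (t • x))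
  refine eq_top_iff.mpr fun ⟨x, y⟩ _ => ?_
  simpa using S.add_mem (hfst x) (hsnd y)

end ProdLie

open ProdLie in
theorem lieSpan_neg_two_diag_eq_top_general
    (k : Type*) [Field k] [CharZero k]
    (m : Type*) [LieRing m] [LieAlgebra k m]
    [LieAlgebra.IsSemisimple k m] :
    LieSubalgebra.lieSpan k (m × m) {p : m × m | ∃ a : m, p = ((-2 : k) • a, a)} = ⊤ :=
  lieSpan_twistedDiagonal_eq_top (isUnit_iff_ne_zero.mpr (by norm_num))
    (isUnit_iff_ne_zero.mpr (by norm_num)) LieAlgebra.IsSemisimple.lie_top_eq_top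

open ProdLie in
/-- for a finite-dimensional semisimple Lie algebra `m` over a field of
characteristic zero, the Lie subalgebra of `m × m` generated by `{(-2a, a) : a ∈ m}`
is all of `m × m`. -/
theorem lieSpan_neg_two_diag_eq_top
    (k : Type*) [Field k] [CharZero k]
    (m : Type*) [LieRing m] [LieAlgebra k m] [Module.Finite k m]
    [LieAlgebra.IsSemisimple k m] :
    LieSubalgebra.lieSpan k (m × m) {p : m × m | ∃ a : m, p = ((-2 : k) • a, a)} = ⊤ :=
  lieSpan_neg_two_diag_eq_top_general k m
end

section
/- Let k be a field of characteristic zero and m a Lie algebra over k. In L₊(m) set D_{a,b} := (1/2)(ad_{[a,b]} + [ad_a, ad_b]) for a, b ∈ m, where ad_z for z ∈ m denotes the image of the generator corresponding to z. Then I_M := span_k{ ad_{[a,b]} − D_{a,b} : a, b ∈ m } and I_L := span_k{ ad_{[a,b]} + 2·D_{a,b} : a, b ∈ m } are Lie ideals of L₊(m), and [I_M, I_L] = 0. -/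
namespace LplusDef

variable (k : Type*) [Field k] (m : Type*) [LieRing m] [LieAlgebra k m]

/-- The set of relations defining `L₊(m)` inside the free Lie algebra on (the
underlying type of) `m`: linearity of the generators `ad`, and
`[[ad_a, ad_b], ad_c] + [ad_[a,b], ad_c] - ad_([[a,b],c] + [[a,c],b] + [a,[b,c]])`. -/
def relSet : Set (FreeLieAlgebra k m) :=
  {x | ∃ (α β : k) (a b : m),
      x = FreeLieAlgebra.of k (α • a + β • b)
          - α • FreeLieAlgebra.of k a - β • FreeLieAlgebra.of k b} ∪
  {x | ∃ a b c : m,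
      x = ⁅⁅FreeLieAlgebra.of k a, FreeLieAlgebra.of k b⁆, FreeLieAlgebra.of k c⁆
          + ⁅FreeLieAlgebra.of k ⁅a, b⁆, FreeLieAlgebra.of k c⁆
          - FreeLieAlgebra.of k (⁅⁅a, b⁆, c⁆ + ⁅⁅a, c⁆, b⁆ + ⁅a, ⁅b, c⁆⁆)}

/-- The Lie ideal of the free Lie algebra generated by the relations. -/
noncomputable def relIdeal : LieIdeal k (FreeLieAlgebra k m) :=
  LieSubmodule.lieSpan k (FreeLieAlgebra k m) (relSet k m)

/-- `L₊(m)`: the quotient of the free Lie algebra on `m` by the relations ideal. -/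
abbrev Lplus := FreeLieAlgebra k m ⧸ relIdeal k m

/-- `ad_a`: the image in `L₊(m)` of the generator corresponding to `a : m`. -/
noncomputable def adgen (a : m) : Lplus k m :=
  LieSubmodule.Quotient.mk' (relIdeal k m) (FreeLieAlgebra.of k a)

end LplusDef

/-!
Write `A_a = adgen k m a` and `D_{a,b} = dgen k m a b`. The second defining relation of `L₊(m)`
says that `ad D_{a,b}` acts on the generators as the derivation `ad_{[a,b]}` of `m`:
`[D_{a,b}, A_c] = A_{[[a,b],c]}`. Together with `[A_a, A_b] = 2 D_{a,b} - A_{[a,b]}` this shows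
that bracketing a spanning vector of `I_M` or `I_L` with a generator gives a multiple of another
spanning vector, and the generators generate `L₊(m)`. The same relation turns `2 D_{[a,b],c}`
into `3 A_{[[a,b],c]} - [[A_a, A_b], A_c]`, so the Jacobi identities in `m` and in `L₊(m)` give
`D_{u,[c,d]} = D_{[u,c],d} + D_{c,[u,d]}`, hence `[D_{a,b}, D_{c,d}] = D_{[a,b],[c,d]}`; with
this the bracket of spanning vectors of `I_M` and `I_L` collapses to `0`.
-/

theorem lie_lie_add_lie_lie_add_lie_lie {L : Type*} [LieRing L] (x y z : L) :
    ⁅⁅x, y⁆, z⁆ + ⁅⁅y, z⁆, x⁆ + ⁅⁅z, x⁆, y⁆ = 0 := by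
  rw [← lie_skew ⁅x, y⁆ z, ← lie_skew ⁅y, z⁆ x, ← lie_skew ⁅z, x⁆ y, ← neg_eq_zero,
    ← lie_jacobi x y z]
  abel

namespace Submodule

variable {R L M : Type*} [CommRing R] [LieRing L] [LieAlgebra R L]
  [AddCommGroup M] [Module R M] [LieRingModule L M] [LieModule R L M]

theorem lie_mem_span_of_lieSpan_eq_top {g : Set L} {s : Set M}
    (hg : LieSubalgebra.lieSpan R L g = ⊤) (h : ∀ y ∈ g, ∀ x ∈ s, ⁅y, x⁆ ∈ span R s)
    (y : L) {x : M} (hx : x ∈ span R s) : ⁅y, x⁆ ∈ span R s := by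
  have hy : y ∈ LieSubalgebra.lieSpan R L g := hg ▸ LieSubalgebra.mem_top y
  induction hy using LieSubalgebra.lieSpan_induction generalizing x with
  | mem y hy =>
    exact span_le (p := (span R s).comap (LieModule.toEnd R L M y)) |>.2 (h y hy) hx
  | zero => simp
  | add y z _ _ hy hz => simpa only [add_lie] using add_mem (hy hx) (hz hx)
  | smul t y _ hy => simpa only [smul_lie] using smul_mem _ t (hy hx)
  | lie y z _ _ hy hz => simpa only [lie_lie] using sub_mem (hy (hz hx)) (hz (hy hx))

theorem lie_eq_zero_of_mem_span {s : Set L} {t : Set M} (h : ∀ x ∈ s, ∀ y ∈ t, ⁅x, y⁆ = 0)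
    {x : L} {y : M} (hx : x ∈ span R s) (hy : y ∈ span R t) : ⁅x, y⁆ = 0 := by
  induction hx, hy using span_induction₂ with
  | mem_mem x y hx hy => exact h x hx y hy
  | zero_left => simp
  | zero_right => simp
  | add_left x y z _ _ _ hx hy => simp [add_lie, hx, hy]
  | add_right x y z _ _ _ hy hz => simp [lie_add, hy, hz]
  | smul_left r x y _ _ h => simp [smul_lie, h]
  | smul_right r x y _ _ h => simp [lie_smul, h]

end Submodule

theorem FreeLieAlgebra.lieSpan_range_of (R X : Type*) [CommRing R] :
    LieSubalgebra.lieSpan R (FreeLieAlgebra R X) (Set.range (of R)) = ⊤ := by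
  set S := LieSubalgebra.lieSpan R (FreeLieAlgebra R X) (Set.range (of R))
  let f : FreeLieAlgebra R X →ₗ⁅R⁆ S :=
    lift R fun x => ⟨of R x, LieSubalgebra.subset_lieSpan ⟨x, rfl⟩⟩
  have hf : S.incl.comp f = LieHom.id := FreeLieAlgebra.hom_ext fun x => by simp [f]
  refine eq_top_iff.2 fun z _ => ?_
  rw [← LieHom.id_apply (R := R) z, ← hf]
  exact (f z).2

namespace LplusDef

noncomputable def dgen (k : Type*) [Field k] (m : Type*) [LieRing m] [LieAlgebra k m]
    (a b : m) : Lplus k m :=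
  (1 / 2 : k) • (adgen k m ⁅a, b⁆ + ⁅adgen k m a, adgen k m b⁆)

variable {k : Type*} [Field k] {m : Type*} [LieRing m] [LieAlgebra k m]

theorem lieSpan_range_adgen :
    LieSubalgebra.lieSpan k (Lplus k m) (Set.range (adgen k m)) = ⊤ := by
  rw [eq_top_iff]
  rintro y -
  obtain ⟨z, rfl⟩ := LieSubmodule.Quotient.surjective_mk' (relIdeal k m) y
  have hz : z ∈ LieSubalgebra.lieSpan k _ (Set.range (FreeLieAlgebra.of k)) :=
    FreeLieAlgebra.lieSpan_range_of k m ▸ LieSubalgebra.mem_top z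
  induction hz using LieSubalgebra.lieSpan_induction with
  | mem _ hx => obtain ⟨a, rfl⟩ := hx; exact LieSubalgebra.subset_lieSpan ⟨a, rfl⟩
  | zero => simp
  | add x y _ _ hx hy => simpa only [map_add] using add_mem hx hy
  | smul t x _ hx => simpa only [map_smul] using LieSubalgebra.smul_mem _ t hx
  | lie x y _ _ hx hy => exact LieSubalgebra.lie_mem _ hx hy

theorem mk_eq_zero_of_mem_relSet {x : FreeLieAlgebra k m} (hx : x ∈ relSet k m) :
    LieSubmodule.Quotient.mk' (relIdeal k m) x = 0 :=
  (LieSubmodule.Quotient.mk_eq_zero _).2 (LieSubmodule.subset_lieSpan hx)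

theorem adgen_smul_add_smul (α β : k) (a b : m) :
    adgen k m (α • a + β • b) = α • adgen k m a + β • adgen k m b := by
  have h := mk_eq_zero_of_mem_relSet (Or.inl ⟨α, β, a, b, rfl⟩)
  rwa [map_sub, map_sub, map_smul, map_smul, sub_sub, sub_eq_zero] at h

theorem adgen_add (a b : m) : adgen k m (a + b) = adgen k m a + adgen k m b := by
  simpa using adgen_smul_add_smul (1 : k) 1 a b

theorem adgen_smul (α : k) (a : m) : adgen k m (α • a) = α • adgen k m a := by
  simpa using adgen_smul_add_smul α (0 : k) a a

theorem adgen_neg (a : m) : adgen k m (-a) = -adgen k m a := by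
  simpa using adgen_smul (-1 : k) a

theorem adgen_zero : adgen k m (0 : m) = 0 := by
  simpa using adgen_smul (0 : k) (0 : m)

theorem lie_lie_adgen_add_lie_adgen (a b c : m) :
    ⁅⁅adgen k m a, adgen k m b⁆, adgen k m c⁆ + ⁅adgen k m ⁅a, b⁆, adgen k m c⁆
      = (2 : k) • adgen k m ⁅⁅a, b⁆, c⁆ := by
  have h := mk_eq_zero_of_mem_relSet (k := k) (Or.inr ⟨a, b, c, rfl⟩)
  rw [map_sub, map_add, sub_eq_zero] at h
  have hm : (⁅⁅a, b⁆, c⁆ + ⁅⁅a, c⁆, b⁆ + ⁅a, ⁅b, c⁆⁆ : m) = (2 : k) • ⁅⁅a, b⁆, c⁆ := by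
    rw [leibniz_lie a b c, ← lie_skew ⁅a, c⁆ b]
    module
  rw [hm] at h
  exact h.trans (adgen_smul 2 _)

theorem dgen_swap (a b : m) : dgen k m b a = -dgen k m a b := by
  rw [dgen, dgen, ← lie_skew a b, ← lie_skew (adgen k m a), adgen_neg]
  module

theorem dgen_neg_right (a b : m) : dgen k m a (-b) = -dgen k m a b := by
  rw [dgen, dgen, lie_neg, adgen_neg, adgen_neg, lie_neg]
  module

theorem dgen_lie_add_dgen_lie_add_dgen_lie (x y z : m) :
    dgen k m ⁅x, y⁆ z + dgen k m ⁅y, z⁆ x + dgen k m ⁅z, x⁆ y = 0 := by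
  have hA : adgen k m ⁅⁅x, y⁆, z⁆ + adgen k m ⁅⁅y, z⁆, x⁆ + adgen k m ⁅⁅z, x⁆, y⁆ = 0 := by
    rw [← adgen_add, ← adgen_add, lie_lie_add_lie_lie_add_lie_lie, adgen_zero]
  have hL := lie_lie_add_lie_lie_add_lie_lie (adgen k m x) (adgen k m y) (adgen k m z)
  have hdgen : ∀ a b c : m, dgen k m ⁅a, b⁆ c = (1 / 2 : k) •
      ((3 : k) • adgen k m ⁅⁅a, b⁆, c⁆ - ⁅⁅adgen k m a, adgen k m b⁆, adgen k m c⁆) := by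
    intro a b c
    rw [dgen, eq_sub_of_add_eq' (lie_lie_adgen_add_lie_adgen (k := k) a b c)]
    module
  rw [hdgen, hdgen, hdgen]
  linear_combination (norm := module) (3 / 2 : k) • hA - (1 / 2 : k) • hL

theorem dgen_leibniz (u c d : m) :
    dgen k m u ⁅c, d⁆ = dgen k m ⁅u, c⁆ d + dgen k m c ⁅u, d⁆ := by
  have h := dgen_lie_add_dgen_lie_add_dgen_lie (k := k) u c d
  rw [dgen_swap u, dgen_swap c, ← lie_skew d u, dgen_neg_right, neg_neg] at h
  linear_combination (norm := module) -h

section CharNeTwo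

variable [NeZero (2 : k)]

theorem lie_adgen_adgen (a b : m) :
    ⁅adgen k m a, adgen k m b⁆ = (2 : k) • dgen k m a b - adgen k m ⁅a, b⁆ := by
  rw [dgen, smul_smul, mul_one_div_cancel two_ne_zero, one_smul, add_sub_cancel_left]

theorem dgen_lie_adgen (a b c : m) : ⁅dgen k m a b, adgen k m c⁆ = adgen k m ⁅⁅a, b⁆, c⁆ := by
  rw [dgen, smul_lie, add_lie, add_comm, lie_lie_adgen_add_lie_adgen, smul_smul,
    one_div_mul_cancel two_ne_zero, one_smul]

theorem adgen_lie_dgen (a b c : m) : ⁅adgen k m c, dgen k m a b⁆ = adgen k m ⁅c, ⁅a, b⁆⁆ := by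
  rw [← lie_skew, dgen_lie_adgen, ← adgen_neg, lie_skew]

theorem lie_dgen_dgen (a b c d : m) :
    ⁅dgen k m a b, dgen k m c d⁆ = dgen k m ⁅a, b⁆ ⁅c, d⁆ := by
  rw [dgen.eq_1 k m c d, lie_smul, lie_add, dgen_lie_adgen,
    leibniz_lie (dgen k m a b) (adgen k m c) (adgen k m d), dgen_lie_adgen, dgen_lie_adgen,
    lie_adgen_adgen, lie_adgen_adgen, dgen_leibniz ⁅a, b⁆ c d, leibniz_lie ⁅a, b⁆ c d,
    adgen_add]
  match_scalars <;> field_simp <;> ring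

theorem adgen_lie_adgen_sub_dgen (a b c : m) :
    ⁅adgen k m c, adgen k m ⁅a, b⁆ - dgen k m a b⁆
      = (-2 : k) • (adgen k m ⁅c, ⁅a, b⁆⁆ - dgen k m c ⁅a, b⁆) := by
  rw [lie_sub, lie_adgen_adgen, adgen_lie_dgen]
  module

theorem adgen_lie_adgen_add_two_smul_dgen (a b c : m) :
    ⁅adgen k m c, adgen k m ⁅a, b⁆ + (2 : k) • dgen k m a b⁆
      = adgen k m ⁅c, ⁅a, b⁆⁆ + (2 : k) • dgen k m c ⁅a, b⁆ := by
  rw [lie_add, lie_smul, lie_adgen_adgen, adgen_lie_dgen]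
  module

theorem lie_adgen_sub_dgen_adgen_add_two_smul_dgen (a b c d : m) :
    ⁅adgen k m ⁅a, b⁆ - dgen k m a b, adgen k m ⁅c, d⁆ + (2 : k) • dgen k m c d⁆ = 0 := by
  rw [sub_lie, lie_add, lie_add, lie_smul, lie_smul, lie_adgen_adgen, adgen_lie_dgen,
    dgen_lie_adgen, lie_dgen_dgen]
  module

end CharNeTwo

end LplusDef

open LplusDef in
/-- for a Lie algebra `m`, with `D_{a,b} = (1/2)(ad_[a,b] + [ad_a, ad_b])`
in `L₊(m)`, the spans `I_M = span{ad_[a,b] - D_{a,b}}` and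
`I_L = span{ad_[a,b] + 2 D_{a,b}}` are Lie ideals of `L₊(m)` and `[I_M, I_L] = 0`. -/
theorem spans_are_ideals_and_commute
    (k : Type*) [Field k] [CharZero k]
    (m : Type*) [LieRing m] [LieAlgebra k m]
    (D : m → m → Lplus k m)
    (hD : D = fun a b =>
      (1 / 2 : k) • (adgen k m ⁅a, b⁆ + ⁅adgen k m a, adgen k m b⁆))
    (IM IL : Submodule k (Lplus k m))
    (hIM : IM = Submodule.span k
      {x : Lplus k m | ∃ a b : m, x = adgen k m ⁅a, b⁆ - D a b})
    (hIL : IL = Submodule.span k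
      {x : Lplus k m | ∃ a b : m, x = adgen k m ⁅a, b⁆ + (2 : k) • D a b}) :
    (∀ x ∈ IM, ∀ y : Lplus k m, ⁅y, x⁆ ∈ IM) ∧
    (∀ x ∈ IL, ∀ y : Lplus k m, ⁅y, x⁆ ∈ IL) ∧
    (∀ x ∈ IM, ∀ y ∈ IL, ⁅x, y⁆ = 0) := by
  obtain rfl : D = dgen k m := hD
  subst hIM hIL
  refine ⟨fun x hx y => ?_, fun x hx y => ?_, fun x hx y hy => ?_⟩
  · refine Submodule.lie_mem_span_of_lieSpan_eq_top lieSpan_range_adgen ?_ y hx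
    rintro _ ⟨c, rfl⟩ _ ⟨a, b, rfl⟩
    rw [adgen_lie_adgen_sub_dgen]
    exact Submodule.smul_mem _ _ (Submodule.subset_span ⟨c, ⁅a, b⁆, rfl⟩)
  · refine Submodule.lie_mem_span_of_lieSpan_eq_top lieSpan_range_adgen ?_ y hx
    rintro _ ⟨c, rfl⟩ _ ⟨a, b, rfl⟩
    rw [adgen_lie_adgen_add_two_smul_dgen]
    exact Submodule.subset_span ⟨c, ⁅a, b⁆, rfl⟩
  · refine Submodule.lie_eq_zero_of_mem_span ?_ hx hy
    rintro _ ⟨a, b, rfl⟩ _ ⟨c, d, rfl⟩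
    exact lie_adgen_sub_dgen_adgen_add_two_smul_dgen a b c d
end
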